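/- Let (X,κ) be a regular Lefschetz complex over a ring R, let 𝒱 be a combinatorial vector field on X with set of heads X⁺, and let Φ be the associated combinatorial flow. Then Φ(C(X⁺)) ⊆ C(X⁺), where C(X⁺) is the submodule of C(X) spanned by X⁺. -/

import Mathlib

/-! The grading forces `κ x y ≠ 0 → κ y x = 0`, so a head `x` (with `κ x (V x) ≠ 0`) is never a
tail and `Γ` kills every chain supported on heads; hence `Φ c = c + Γ (∂ c)` for such `c`.
Moreover `Γ` only produces partners `V x` of tails `x`, and these are heads since `V` is an
involution. -/

section Lefschetz

variable {R : Type*} [Ring R] {X : Type*} [Fintype X] [DecidableEq X]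

/-- The linear endomorphism of the free module `X → R` determined by a "matrix"
`m : X → X → R`, sending a generator `x` to `∑ y, m x y • y`.  For `m = κ` this is the
boundary operator `∂^κ` of a Lefschetz complex `(X, κ)`. -/
noncomputable def lmat (m : X → X → R) : (X → R) →ₗ[R] (X → R) where
  toFun c := fun y => ∑ x, c x * m x y
  map_add' c c' := by
    funext y
    simp [add_mul, Finset.sum_add_distrib]
  map_smul' r c := by
    funext y
    simp [Finset.mul_sum, mul_assoc]

open Classical in
/-- The degree `+1` homomorphism `Γ` associated with a combinatorial vector field,
encoded by the pairing involution `V` : on generators, `Γ x = -κ(x⁺,x⁻)⁻¹ x⁺` if `x` is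
a tail (`x = x⁻ ≠ x⁺ = V x`), and `Γ x = 0` otherwise. -/
noncomputable def gammaMap (κ : X → X → R) (V : X → X) : (X → R) →ₗ[R] (X → R) :=
  lmat fun x y => if V x ≠ x ∧ κ (V x) x ≠ 0 ∧ y = V x then -(Ring.inverse (κ (V x) x)) else 0

/-- The combinatorial flow `Φ = id + ∂^κ ∘ Γ + Γ ∘ ∂^κ` of a combinatorial vector field. -/
noncomputable def flowMap (κ : X → X → R) (V : X → X) : (X → R) →ₗ[R] (X → R) :=
  LinearMap.id + lmat κ ∘ₗ gammaMap κ V + gammaMap κ V ∘ₗ lmat κ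

omit [DecidableEq X] in
lemma lmat_apply (m : X → X → R) (c : X → R) (y : X) : lmat m c y = ∑ x, c x * m x y := rfl

section Heads

variable (κ : X → X → R) (V : X → X)

/-- `x ∈ X⁺`, i.e. `x = x⁺ ≠ x⁻ = V x`: `{x, V x}` is a vector with `V x` a facet of `x`. -/
def IsHead (x : X) : Prop := V x ≠ x ∧ κ x (V x) ≠ 0

variable {κ V}

omit [Fintype X] [DecidableEq X] in
lemma swap_eq_zero_of_ne_zero_of_grading {dim : X → ℕ}
    (hdim : ∀ x y : X, κ x y ≠ 0 → dim x = dim y + 1) {a b : X} (hab : κ a b ≠ 0) :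
    κ b a = 0 := by
  by_contra hba
  have := hdim a b hab
  have := hdim b a hba
  omega

lemma isHead_of_gammaMap_apply_ne_zero (hinv : ∀ x, V (V x) = x) {d : X → R} {z : X}
    (hz : gammaMap κ V d z ≠ 0) : IsHead κ V z := by
  rw [gammaMap, lmat_apply] at hz
  obtain ⟨x, -, hx⟩ := Finset.exists_ne_zero_of_sum_ne_zero hz
  by_cases htail : V x ≠ x ∧ κ (V x) x ≠ 0 ∧ z = V x
  · obtain ⟨hVx, hκ, rfl⟩ := htail
    rw [IsHead, hinv]
    exact ⟨Ne.symm hVx, hκ⟩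
  · rw [if_neg htail, mul_zero] at hx
    exact absurd rfl hx

lemma gammaMap_eq_zero_of_isHead (hanti : ∀ a b : X, κ a b ≠ 0 → κ b a = 0) {c : X → R}
    (hc : ∀ x, c x ≠ 0 → IsHead κ V x) : gammaMap κ V c = 0 := by
  funext z
  rw [gammaMap, lmat_apply]
  refine Finset.sum_eq_zero fun x _ => ?_
  by_cases hcx : c x = 0
  · rw [hcx, zero_mul]
  · rw [if_neg fun htail => htail.2.1 (hanti x (V x) (hc x hcx).2), mul_zero]

lemma flowMap_apply_of_gammaMap_eq_zero {c : X → R} (hc : gammaMap κ V c = 0) :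
    flowMap κ V c = c + gammaMap κ V (lmat κ c) := by
  simp [flowMap, hc]

end Heads

theorem stmt_18_general (dim : X → ℕ) (κ : X → X → R)
    (hκ1 : ∀ x y : X, κ x y ≠ 0 → dim x = dim y + 1)
    (V : X → X) (hinv : ∀ x, V (V x) = x) :
    ∀ c : X → R, (∀ x : X, c x ≠ 0 → V x ≠ x ∧ κ x (V x) ≠ 0) →
      ∀ y : X, flowMap κ V c y ≠ 0 → V y ≠ y ∧ κ y (V y) ≠ 0 := by
  intro c hc y hy
  have hΓc : gammaMap κ V c = 0 :=
    gammaMap_eq_zero_of_isHead (fun _ _ => swap_eq_zero_of_ne_zero_of_grading hκ1) hc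
  rw [flowMap_apply_of_gammaMap_eq_zero hΓc] at hy
  by_cases hcy : c y = 0
  · rw [Pi.add_apply, hcy, zero_add] at hy
    exact isHead_of_gammaMap_apply_ne_zero hinv hy
  · exact hc y hcy

/-- Let `(X,κ)` be a regular Lefschetz complex and `𝒱` a combinatorial vector field on
`X`, encoded by the involution `V`.  The set of heads is `X⁺ = {x | x = x⁺ ≠ x⁻}`, i.e.
`V x ≠ x ∧ κ x (V x) ≠ 0`.  Then the combinatorial flow `Φ` maps `C(X⁺)` into itself:
every chain supported on heads is sent to a chain supported on heads. -/
theorem stmt_18 (dim : X → ℕ) (κ : X → X → R)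
    (hκ1 : ∀ x y : X, κ x y ≠ 0 → dim x = dim y + 1)
    (hκ2 : ∀ x z : X, ∑ y, κ x y * κ y z = 0)
    (hreg : ∀ x y : X, κ x y ≠ 0 → IsUnit (κ x y))
    (V : X → X) (hinv : ∀ x, V (V x) = x)
    (hvec : ∀ x : X, V x ≠ x → κ (V x) x ≠ 0 ∨ κ x (V x) ≠ 0) :
    ∀ c : X → R, (∀ x : X, c x ≠ 0 → V x ≠ x ∧ κ x (V x) ≠ 0) →
      ∀ y : X, flowMap κ V c y ≠ 0 → V y ≠ y ∧ κ y (V y) ≠ 0 :=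
  stmt_18_general dim κ hκ1 V hinv

end Lefschetz
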